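/- For every positive integer N there exists an N×N complex matrix Z = {z_{jk}} with |z_{jk}| = 1 for all j,k such that for every p ∈ (0,2], sup{‖Z⋆B‖_{S_p} : B an N×N complex matrix with ‖B‖_{S_p} ≤ 1} = N^{1/p − 1/2}. -/

import Mathlib

open scoped BigOperators

/-- Schatten `p`-(quasi)norm of a finite square complex matrix:
`(∑ i, s_i(A)^p)^(1/p)` where the `s_i(A)` are the singular values of `A`,
i.e. the square roots of the eigenvalues of `Aᴴ * A`. -/
noncomputable def schattenNorm {ι : Type*} [Fintype ι] [DecidableEq ι] (p : ℝ)
    (A : Matrix ι ι ℂ) : ℝ :=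
  (∑ i, Real.sqrt ((Matrix.isHermitian_conjTranspose_mul_self A).eigenvalues i) ^ p) ^ (1 / p)

/-!
Take for `Z` the Fourier matrix `(ζ ^ (j * k))` with `ζ` a primitive `N`-th root of unity, so
that `Zᴴ Z = N • 1`. Multiplying entrywise by unimodular numbers preserves the Hilbert–Schmidt
norm `S_2`, and on `N × N` matrices `‖A‖_{S_p} ≤ N^{1/p - 1/2} ‖A‖_{S_2} ≤ N^{1/p - 1/2} ‖A‖_{S_p}`
(Hölder and the monotonicity of `ℓ^p`-norms, applied to the singular values); this gives the upper
bound. It is attained at the averaging matrix `B = J / N`: `B` is a rank-one orthogonal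
projection, so `‖B‖_{S_p} = 1`, while `Z ⋆ B = Z / N` has all its singular values equal to
`N^{-1/2}`.
-/

open Finset Matrix

namespace Real

theorem rpow_sum_le_sum_rpow {ι : Type*} {s : Finset ι} {f : ι → ℝ} (hf : ∀ i ∈ s, 0 ≤ f i)
    {r : ℝ} (hr₀ : 0 < r) (hr₁ : r ≤ 1) : (∑ i ∈ s, f i) ^ r ≤ ∑ i ∈ s, f i ^ r := by
  classical
  induction s using Finset.induction_on with
  | empty => simp [zero_rpow hr₀.ne']
  | insert a s ha ih =>
    rw [sum_insert ha, sum_insert ha]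
    have hs : ∀ i ∈ s, 0 ≤ f i := fun i hi => hf i (mem_insert_of_mem hi)
    calc (f a + ∑ i ∈ s, f i) ^ r ≤ f a ^ r + (∑ i ∈ s, f i) ^ r :=
          rpow_add_le_add_rpow (hf a (mem_insert_self a s)) (sum_nonneg hs) hr₀.le hr₁
      _ ≤ f a ^ r + ∑ i ∈ s, f i ^ r := by gcongr; exact ih hs

theorem sum_rpow_rpow_inv_le_of_le {ι : Type*} {s : Finset ι} {f : ι → ℝ}
    (hf : ∀ i ∈ s, 0 ≤ f i) {p q : ℝ} (hp : 0 < p) (hpq : p ≤ q) :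
    (∑ i ∈ s, f i ^ q) ^ (1 / q) ≤ (∑ i ∈ s, f i ^ p) ^ (1 / p) := by
  have hq : 0 < q := hp.trans_le hpq
  have hsq : 0 ≤ ∑ i ∈ s, f i ^ q := sum_nonneg fun i hi => rpow_nonneg (hf i hi) q
  have key : (∑ i ∈ s, f i ^ q) ^ (p / q) ≤ ∑ i ∈ s, f i ^ p := by
    calc (∑ i ∈ s, f i ^ q) ^ (p / q) ≤ ∑ i ∈ s, (f i ^ q) ^ (p / q) :=
          rpow_sum_le_sum_rpow (fun i hi => rpow_nonneg (hf i hi) q) (by positivity)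
            ((div_le_one hq).2 hpq)
      _ = ∑ i ∈ s, f i ^ p := sum_congr rfl fun i hi => by
          rw [← rpow_mul (hf i hi), mul_div_cancel₀ p hq.ne']
  calc (∑ i ∈ s, f i ^ q) ^ (1 / q) = ((∑ i ∈ s, f i ^ q) ^ (p / q)) ^ (1 / p) := by
        rw [← rpow_mul hsq]; congr 1; field_simp
    _ ≤ (∑ i ∈ s, f i ^ p) ^ (1 / p) := by gcongr

theorem sum_rpow_rpow_inv_le_card_mul {ι : Type*} {s : Finset ι} {f : ι → ℝ}
    (hf : ∀ i ∈ s, 0 ≤ f i) {p q : ℝ} (hp : 0 < p) (hpq : p ≤ q) :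
    (∑ i ∈ s, f i ^ p) ^ (1 / p) ≤ (#s : ℝ) ^ (1 / p - 1 / q) * (∑ i ∈ s, f i ^ q) ^ (1 / q) := by
  have hq : 0 < q := hp.trans_le hpq
  have hsp : 0 ≤ ∑ i ∈ s, f i ^ p := sum_nonneg fun i hi => rpow_nonneg (hf i hi) p
  have key : (∑ i ∈ s, f i ^ p) ^ (q / p) ≤ (#s : ℝ) ^ (q / p - 1) * ∑ i ∈ s, f i ^ q := by
    calc (∑ i ∈ s, f i ^ p) ^ (q / p) ≤ (#s : ℝ) ^ (q / p - 1) * ∑ i ∈ s, (f i ^ p) ^ (q / p) :=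
          rpow_sum_le_const_mul_sum_rpow_of_nonneg s ((one_le_div hp).2 hpq)
            fun i hi => rpow_nonneg (hf i hi) p
      _ = (#s : ℝ) ^ (q / p - 1) * ∑ i ∈ s, f i ^ q := by
          congr 1
          exact sum_congr rfl fun i hi => by rw [← rpow_mul (hf i hi), mul_div_cancel₀ q hp.ne']
  calc (∑ i ∈ s, f i ^ p) ^ (1 / p) = ((∑ i ∈ s, f i ^ p) ^ (q / p)) ^ (1 / q) := by
        rw [← rpow_mul hsp]; congr 1; field_simp
    _ ≤ ((#s : ℝ) ^ (q / p - 1) * ∑ i ∈ s, f i ^ q) ^ (1 / q) := by gcongr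
    _ = (#s : ℝ) ^ (1 / p - 1 / q) * (∑ i ∈ s, f i ^ q) ^ (1 / q) := by
        rw [mul_rpow (by positivity) (sum_nonneg fun i hi => rpow_nonneg (hf i hi) q),
          ← rpow_mul (by positivity)]
        congr 2
        field_simp

end Real

namespace Matrix.IsHermitian

variable {𝕜 n : Type*} [RCLike 𝕜] [Fintype n] [DecidableEq n] {A : Matrix n n 𝕜}

theorem eigenvalues_eq_of_eq_smul_one (hA : A.IsHermitian) {c : ℝ} (h : A = c • 1) (i : n) :
    hA.eigenvalues i = c := by
  have : Nonempty n := ⟨i⟩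
  simpa [h, ← Algebra.algebraMap_eq_smul_one, spectrum.scalar_eq] using
    hA.eigenvalues_mem_spectrum_real i

theorem eigenvalues_eq_zero_or_one (hA : A.IsHermitian) (h : IsIdempotentElem A) (i : n) :
    hA.eigenvalues i = 0 ∨ hA.eigenvalues i = 1 :=
  h.spectrum_subset ℝ (hA.eigenvalues_mem_spectrum_real i)

end Matrix.IsHermitian

section Schatten

variable {ι : Type*} [Fintype ι] [DecidableEq ι]

theorem sum_eigenvalues_conjTranspose_mul_self (A : Matrix ι ι ℂ) :
    ∑ i, (isHermitian_conjTranspose_mul_self A).eigenvalues i = ∑ j, ∑ k, ‖A j k‖ ^ 2 := by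
  have htrace : (Aᴴ * A).trace = ((∑ j, ∑ k, ‖A j k‖ ^ 2 : ℝ) : ℂ) := by
    rw [trace, sum_comm]
    push_cast
    simp [mul_apply, Complex.conj_mul']
  have h := (isHermitian_conjTranspose_mul_self A).trace_eq_sum_eigenvalues.symm.trans htrace
  rw [← RCLike.ofReal_sum] at h
  exact Complex.ofReal_injective h

theorem schattenNorm_two (A : Matrix ι ι ℂ) :
    schattenNorm 2 A = (∑ j, ∑ k, ‖A j k‖ ^ 2) ^ (1 / 2 : ℝ) := by
  rw [schattenNorm, ← sum_eigenvalues_conjTranspose_mul_self]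
  congr 1
  refine sum_congr rfl fun i _ => ?_
  rw [Real.rpow_two, Real.sq_sqrt (eigenvalues_conjTranspose_mul_self_nonneg A i)]

theorem schattenNorm_two_hadamard_of_norm_eq_one {Z : Matrix ι ι ℂ} (hZ : ∀ j k, ‖Z j k‖ = 1)
    (B : Matrix ι ι ℂ) : schattenNorm 2 (hadamard Z B) = schattenNorm 2 B := by
  simp only [schattenNorm_two, hadamard_apply, norm_mul, hZ, one_mul]

theorem schattenNorm_le_of_le (A : Matrix ι ι ℂ) {p q : ℝ} (hp : 0 < p) (hpq : p ≤ q) :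
    schattenNorm q A ≤ schattenNorm p A :=
  Real.sum_rpow_rpow_inv_le_of_le (fun _ _ => Real.sqrt_nonneg _) hp hpq

theorem schattenNorm_le_card_rpow_mul (A : Matrix ι ι ℂ) {p q : ℝ} (hp : 0 < p) (hpq : p ≤ q) :
    schattenNorm p A ≤ (Fintype.card ι : ℝ) ^ (1 / p - 1 / q) * schattenNorm q A :=
  card_univ (α := ι) ▸ Real.sum_rpow_rpow_inv_le_card_mul (fun _ _ => Real.sqrt_nonneg _) hp hpq

theorem schattenNorm_hadamard_le_of_norm_eq_one {Z : Matrix ι ι ℂ} (hZ : ∀ j k, ‖Z j k‖ = 1)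
    (B : Matrix ι ι ℂ) {p : ℝ} (hp : 0 < p) (hp₂ : p ≤ 2) :
    schattenNorm p (hadamard Z B) ≤ (Fintype.card ι : ℝ) ^ (1 / p - 1 / 2) * schattenNorm p B :=
  calc schattenNorm p (hadamard Z B)
      ≤ (Fintype.card ι : ℝ) ^ (1 / p - 1 / 2) * schattenNorm 2 (hadamard Z B) :=
        schattenNorm_le_card_rpow_mul _ hp hp₂
    _ = (Fintype.card ι : ℝ) ^ (1 / p - 1 / 2) * schattenNorm 2 B := by
        rw [schattenNorm_two_hadamard_of_norm_eq_one hZ]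
    _ ≤ (Fintype.card ι : ℝ) ^ (1 / p - 1 / 2) * schattenNorm p B := by
        gcongr
        exact schattenNorm_le_of_le B hp hp₂

theorem schattenNorm_of_conjTranspose_mul_self_eq_smul_one {A : Matrix ι ι ℂ} {c : ℝ}
    (h : Aᴴ * A = c • 1) {p : ℝ} (hp : 0 < p) :
    schattenNorm p A = (Fintype.card ι : ℝ) ^ (1 / p) * √c := by
  simp only [schattenNorm, (isHermitian_conjTranspose_mul_self A).eigenvalues_eq_of_eq_smul_one h,
    sum_const, card_univ, nsmul_eq_mul]
  rw [Real.mul_rpow (by positivity) (by positivity), one_div, Real.rpow_rpow_inv (by positivity)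
    hp.ne']

theorem schattenNorm_of_isIdempotentElem {A : Matrix ι ι ℂ} (h : IsIdempotentElem (Aᴴ * A))
    {p : ℝ} (hp : 0 < p) : schattenNorm p A = (∑ j, ∑ k, ‖A j k‖ ^ 2) ^ (1 / p) := by
  rw [schattenNorm, ← sum_eigenvalues_conjTranspose_mul_self]
  congr 1
  refine sum_congr rfl fun i _ => ?_
  rcases (isHermitian_conjTranspose_mul_self A).eigenvalues_eq_zero_or_one h i with h0 | h1
  · rw [h0, Real.sqrt_zero, Real.zero_rpow hp.ne']
  · rw [h1, Real.sqrt_one, Real.one_rpow]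

end Schatten

section Averaging

variable (ι : Type*) [Fintype ι]

noncomputable def averagingMatrix : Matrix ι ι ℂ :=
  of fun _ _ => (Fintype.card ι : ℂ)⁻¹

theorem conjTranspose_averagingMatrix : (averagingMatrix ι)ᴴ = averagingMatrix ι := by
  ext j k
  simp [averagingMatrix]

variable [Nonempty ι]

theorem averagingMatrix_mul_self : averagingMatrix ι * averagingMatrix ι = averagingMatrix ι := by
  ext j k
  simp [averagingMatrix, mul_apply]

variable [DecidableEq ι]

theorem schattenNorm_averagingMatrix {p : ℝ} (hp : 0 < p) :
    schattenNorm p (averagingMatrix ι) = 1 := by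
  have hidem : IsIdempotentElem ((averagingMatrix ι)ᴴ * averagingMatrix ι) := by
    rw [conjTranspose_averagingMatrix, averagingMatrix_mul_self, IsIdempotentElem,
      averagingMatrix_mul_self]
  have hfrob : ∑ j, ∑ k, ‖averagingMatrix ι j k‖ ^ 2 = 1 := by
    simp only [averagingMatrix, of_apply, norm_inv, Complex.norm_natCast, sum_const, card_univ,
      nsmul_eq_mul]
    field_simp
  rw [schattenNorm_of_isIdempotentElem hidem hp, hfrob, Real.one_rpow]

variable {ι}

theorem schattenNorm_hadamard_averagingMatrix {Z : Matrix ι ι ℂ}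
    (hZ : Zᴴ * Z = (Fintype.card ι : ℝ) • 1) {p : ℝ} (hp : 0 < p) :
    schattenNorm p (hadamard Z (averagingMatrix ι)) = (Fintype.card ι : ℝ) ^ (1 / p - 1 / 2) := by
  have hn : (0 : ℝ) < Fintype.card ι := Nat.cast_pos.2 Fintype.card_pos
  have hscaled : hadamard Z (averagingMatrix ι) = (Fintype.card ι : ℝ)⁻¹ • Z := by
    ext j k
    simp [averagingMatrix, mul_comm]
  have hunit : (hadamard Z (averagingMatrix ι))ᴴ * hadamard Z (averagingMatrix ι) =
      (Fintype.card ι : ℝ)⁻¹ • 1 := by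
    rw [hscaled, conjTranspose_smul, star_trivial, smul_mul, Matrix.mul_smul, hZ, smul_smul,
      smul_smul]
    congr 1
    field_simp
  rw [schattenNorm_of_conjTranspose_mul_self_eq_smul_one hunit hp, Real.sqrt_inv,
    Real.sqrt_eq_rpow, ← Real.rpow_neg hn.le, ← Real.rpow_add hn, ← sub_eq_add_neg]

end Averaging

def fourierMatrix (N : ℕ) (ζ : ℂ) : Matrix (Fin N) (Fin N) ℂ :=
  of fun j k => ζ ^ ((j : ℕ) * k)

namespace IsPrimitiveRoot

variable {N : ℕ} {ζ : ℂ}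

theorem norm_fourierMatrix_apply (hζ : IsPrimitiveRoot ζ N) (j k : Fin N) :
    ‖fourierMatrix N ζ j k‖ = 1 := by
  simp [fourierMatrix, hζ.norm'_eq_one (Fin.pos j).ne']

theorem conjTranspose_fourierMatrix_mul_self (hζ : IsPrimitiveRoot ζ N) :
    (fourierMatrix N ζ)ᴴ * fourierMatrix N ζ = (N : ℝ) • 1 := by
  ext k l
  have hζ₀ : ζ ≠ 0 := hζ.ne_zero (Fin.pos k).ne'
  have hstar : star ζ = ζ⁻¹ := (Complex.inv_eq_conj (hζ.norm'_eq_one (Fin.pos k).ne')).symm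
  set w := ζ ^ (l : ℕ) * (ζ ^ (k : ℕ))⁻¹
  have hentry : ((fourierMatrix N ζ)ᴴ * fourierMatrix N ζ) k l = ∑ j ∈ range N, w ^ j := by
    rw [mul_apply, ← Fin.sum_univ_eq_sum_range (fun j => w ^ j) N]
    refine sum_congr rfl fun j _ => ?_
    simp only [conjTranspose_apply, fourierMatrix, of_apply, star_pow, hstar, w]
    ring
  rw [hentry]
  rcases eq_or_ne k l with rfl | hkl
  · simp [w, hζ₀]
  · have hw₁ : w ≠ 1 := by
      rw [Ne, mul_inv_eq_one₀ (pow_ne_zero _ hζ₀)]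
      exact fun h => hkl (Fin.ext (hζ.pow_inj l.2 k.2 h).symm)
    have hwN : w ^ N = 1 := by
      rw [mul_pow, inv_pow, ← pow_mul, ← pow_mul, mul_comm _ N, mul_comm _ N, pow_mul, pow_mul,
        hζ.pow_eq_one, one_pow, one_pow, inv_one, mul_one]
    simp [geom_sum_eq hw₁, hwN, one_apply, hkl]

end IsPrimitiveRoot

/-- Lemma 7.4: for every `N ≥ 1` there is an `N × N` matrix `Z` with unimodular entries
whose Schur multiplier norm on `S_p` equals `N^{1/p - 1/2}` for every `p ∈ (0, 2]`. -/
theorem stmt19 (N : ℕ) (hN : 0 < N) :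
    ∃ Z : Matrix (Fin N) (Fin N) ℂ, (∀ j k, ‖Z j k‖ = 1) ∧
      ∀ p : ℝ, 0 < p → p ≤ 2 →
        sSup {c : ℝ | ∃ B : Matrix (Fin N) (Fin N) ℂ, schattenNorm p B ≤ 1 ∧
            c = schattenNorm p (Matrix.hadamard Z B)} =
          (N : ℝ) ^ (1 / p - 1 / 2) := by
  obtain ⟨ζ, hζ⟩ : ∃ ζ : ℂ, IsPrimitiveRoot ζ N := ⟨_, Complex.isPrimitiveRoot_exp N hN.ne'⟩
  refine ⟨fourierMatrix N ζ, hζ.norm_fourierMatrix_apply, fun p hp hp₂ => ?_⟩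
  have : Nonempty (Fin N) := ⟨⟨0, hN⟩⟩
  refine IsGreatest.csSup_eq ⟨⟨averagingMatrix _, (schattenNorm_averagingMatrix _ hp).le, ?_⟩, ?_⟩
  · have hZ : (fourierMatrix N ζ)ᴴ * fourierMatrix N ζ = (Fintype.card (Fin N) : ℝ) • 1 := by
      rw [Fintype.card_fin]
      exact hζ.conjTranspose_fourierMatrix_mul_self
    rw [schattenNorm_hadamard_averagingMatrix hZ hp, Fintype.card_fin]
  · rintro _ ⟨B, hB, rfl⟩
    have h := schattenNorm_hadamard_le_of_norm_eq_one hζ.norm_fourierMatrix_apply B hp hp₂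
    rw [Fintype.card_fin] at h
    exact h.trans (mul_le_of_le_one_right (by positivity) hB)
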